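/- Let (P,w) be a normalized weighted set of n points in R^d with d ≥ 1, let ε ∈ (0, 1/36), and let u ∈ R^n be such that for every x ∈ R^d, |Σ_i w_i ‖p_i − x‖² − Σ_i u_i ‖p_i − x‖²| ≤ √ε · Σ_i w_i ‖p_i − x‖². Then ‖Σ_i (u_i/‖u‖_1) p_i‖ ≤ 6√ε, and consequently Σ_i w_i ‖p_i − s̄‖² ≤ (1 + 36ε) min_{x∈R^d} Σ_i w_i ‖p_i − x‖², where s̄ = Σ_i (u_i/‖u‖_1) p_i. -/

import Mathlib

/-!
Both costs are quadratic in the query: the normalized set has cost `1 + ‖x‖²`, while the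
coreset has cost `A - 2⟪v, x⟫ + U‖x‖²` with `v = ∑ uᵢ pᵢ` and `U = ∑ uᵢ`. Comparing them at
`0` and at `±e` for a unit vector `e` gives `|⟪v, e⟫| ≤ √ε` and `|1 - U| ≤ 3√ε`. Taking
`e = v / ‖v‖` yields `‖v‖ ≤ √ε` and `‖u‖₁ ≥ U ≥ 1/2`, so the normalized mean `s̄ = v / ‖u‖₁`
has norm at most `2√ε`, and its cost `1 + ‖s̄‖²` is at most `1 + 4ε`.
-/

open scoped InnerProductSpace

section

variable {ι E : Type*} [Fintype ι] [NormedAddCommGroup E] [InnerProductSpace ℝ E]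

theorem sum_mul_norm_sub_sq (c : ι → ℝ) (p : ι → E) (x : E) :
    ∑ i, c i * ‖p i - x‖ ^ 2 =
      ∑ i, c i * ‖p i‖ ^ 2 - 2 * ⟪∑ i, c i • p i, x⟫_ℝ + (∑ i, c i) * ‖x‖ ^ 2 := by
  simp only [norm_sub_sq_real, sum_inner, real_inner_smul_left, mul_add, mul_sub,
    Finset.sum_add_distrib, Finset.sum_sub_distrib, Finset.mul_sum, Finset.sum_mul]
  congr 2
  exact Finset.sum_congr rfl fun i _ => by ring

theorem sum_mul_norm_sub_sq_of_normalized {w : ι → ℝ} {p : ι → E} (hw1 : ∑ i, w i = 1)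
    (hw2 : ∑ i, w i • p i = 0) (hw3 : ∑ i, w i * ‖p i‖ ^ 2 = 1) (x : E) :
    ∑ i, w i * ‖p i - x‖ ^ 2 = 1 + ‖x‖ ^ 2 := by
  simp [sum_mul_norm_sub_sq, hw1, hw2, hw3]

end

section QuadraticApprox

variable {E : Type*} [NormedAddCommGroup E] [InnerProductSpace ℝ E] {A U δ : ℝ} {v : E}

theorem abs_inner_le_of_quadratic_approx
    (h : ∀ x : E, |1 + ‖x‖ ^ 2 - (A - 2 * ⟪v, x⟫_ℝ + U * ‖x‖ ^ 2)| ≤ δ * (1 + ‖x‖ ^ 2))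
    {e : E} (he : ‖e‖ = 1) : |⟪v, e⟫_ℝ| ≤ δ := by
  have hpos := h e
  have hneg := h (-e)
  rw [he] at hpos
  rw [norm_neg, he, inner_neg_right] at hneg
  rw [abs_le] at hpos hneg ⊢
  constructor <;> linarith [hpos.1, hpos.2, hneg.1, hneg.2]

theorem abs_one_sub_le_of_quadratic_approx
    (h : ∀ x : E, |1 + ‖x‖ ^ 2 - (A - 2 * ⟪v, x⟫_ℝ + U * ‖x‖ ^ 2)| ≤ δ * (1 + ‖x‖ ^ 2))
    {e : E} (he : ‖e‖ = 1) : |1 - U| ≤ 3 * δ := by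
  have hzero := h 0
  have hpos := h e
  have hneg := h (-e)
  rw [he] at hpos
  rw [norm_neg, he, inner_neg_right] at hneg
  simp only [norm_zero, inner_zero_right] at hzero
  rw [abs_le] at hzero hpos hneg ⊢
  constructor <;> linarith [hzero.1, hzero.2, hpos.1, hpos.2, hneg.1, hneg.2]

theorem norm_inv_smul_le_of_quadratic_approx
    (h : ∀ x : E, |1 + ‖x‖ ^ 2 - (A - 2 * ⟪v, x⟫_ℝ + U * ‖x‖ ^ 2)| ≤ δ * (1 + ‖x‖ ^ 2))
    (hδ : δ < 1 / 6) {S : ℝ} (hUS : U ≤ S) : ‖S⁻¹ • v‖ ≤ 2 * δ := by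
  rcases eq_or_ne v 0 with rfl | hv
  · have hδ0 : 0 ≤ δ := by simpa using (abs_nonneg _).trans (h 0)
    simpa using hδ0
  have he : ‖(‖v‖⁻¹ : ℝ) • v‖ = 1 := norm_smul_inv_norm hv
  have hv_le : ‖v‖ ≤ δ := by
    have := abs_inner_le_of_quadratic_approx h he
    rwa [real_inner_smul_right, real_inner_self_eq_norm_sq, pow_two, inv_mul_cancel_left₀
      (norm_ne_zero_iff.2 hv), abs_norm] at this
  have hS : 1 / 2 ≤ S := by
    have := abs_one_sub_le_of_quadratic_approx h he
    rw [abs_le] at this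
    linarith [this.2]
  rw [norm_smul, norm_inv, Real.norm_eq_abs, abs_of_pos (by linarith), inv_mul_le_iff₀
    (by linarith)]
  nlinarith [norm_nonneg v]

end QuadraticApprox

theorem stmt4_general {d n : ℕ} (p : Fin n → EuclideanSpace ℝ (Fin d)) (w : Fin n → ℝ)
    (hw1 : ∑ i, w i = 1) (hw2 : ∑ i, w i • p i = 0) (hw3 : ∑ i, w i * ‖p i‖ ^ 2 = 1)
    (ε : ℝ) (hε : ε ∈ Set.Ioo (0 : ℝ) (1 / 36)) (u : Fin n → ℝ)
    (hcore : ∀ x : EuclideanSpace ℝ (Fin d),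
      |∑ i, w i * ‖p i - x‖ ^ 2 - ∑ i, u i * ‖p i - x‖ ^ 2|
        ≤ Real.sqrt ε * ∑ i, w i * ‖p i - x‖ ^ 2)
    (sbar : EuclideanSpace ℝ (Fin d))
    (hsbar : sbar = ∑ i, (u i / ∑ j, |u j|) • p i) :
    ‖sbar‖ ≤ 6 * Real.sqrt ε ∧
      ∀ x : EuclideanSpace ℝ (Fin d),
        ∑ i, w i * ‖p i - sbar‖ ^ 2 ≤ (1 + 36 * ε) * ∑ i, w i * ‖p i - x‖ ^ 2 := by
  obtain ⟨hε0, hε1⟩ := hε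
  have hcost := sum_mul_norm_sub_sq_of_normalized hw1 hw2 hw3
  have happrox : ∀ x, |1 + ‖x‖ ^ 2 - (∑ i, u i * ‖p i‖ ^ 2 - 2 * ⟪∑ i, u i • p i, x⟫_ℝ
      + (∑ i, u i) * ‖x‖ ^ 2)| ≤ Real.sqrt ε * (1 + ‖x‖ ^ 2) := fun x => by
    rw [← hcost x, ← sum_mul_norm_sub_sq]
    exact hcore x
  have hsqrt : Real.sqrt ε < 1 / 6 := (Real.sqrt_lt' (by norm_num)).2 (by linarith)
  have hsbar_eq : sbar = (∑ j, |u j|)⁻¹ • ∑ i, u i • p i := by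
    simp only [hsbar, Finset.smul_sum, smul_smul, div_eq_inv_mul]
  have hsbar_le : ‖sbar‖ ≤ 2 * Real.sqrt ε := hsbar_eq ▸
    norm_inv_smul_le_of_quadratic_approx happrox hsqrt
      (Finset.sum_le_sum fun i _ => le_abs_self (u i))
  have hsbar_sq : ‖sbar‖ ^ 2 ≤ 4 * ε := by
    calc ‖sbar‖ ^ 2 ≤ (2 * Real.sqrt ε) ^ 2 := pow_le_pow_left₀ (norm_nonneg _) hsbar_le 2
      _ = 4 * ε := by rw [mul_pow, Real.sq_sqrt hε0.le]; norm_num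
  refine ⟨by linarith [Real.sqrt_nonneg ε], fun x => ?_⟩
  rw [hcost, hcost]
  nlinarith [sq_nonneg ‖x‖]

theorem stmt4 {d n : ℕ} (hd : 1 ≤ d) (p : Fin n → EuclideanSpace ℝ (Fin d)) (w : Fin n → ℝ)
    (hw1 : ∑ i, w i = 1) (hw2 : ∑ i, w i • p i = 0) (hw3 : ∑ i, w i * ‖p i‖ ^ 2 = 1)
    (ε : ℝ) (hε : ε ∈ Set.Ioo (0 : ℝ) (1 / 36)) (u : Fin n → ℝ)
    (hu : 0 < ∑ i, |u i|)
    (hcore : ∀ x : EuclideanSpace ℝ (Fin d),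
      |∑ i, w i * ‖p i - x‖ ^ 2 - ∑ i, u i * ‖p i - x‖ ^ 2|
        ≤ Real.sqrt ε * ∑ i, w i * ‖p i - x‖ ^ 2)
    (sbar : EuclideanSpace ℝ (Fin d))
    (hsbar : sbar = ∑ i, (u i / ∑ j, |u j|) • p i) :
    ‖sbar‖ ≤ 6 * Real.sqrt ε ∧
      ∀ x : EuclideanSpace ℝ (Fin d),
        ∑ i, w i * ‖p i - sbar‖ ^ 2 ≤ (1 + 36 * ε) * ∑ i, w i * ‖p i - x‖ ^ 2 :=
  stmt4_general p w hw1 hw2 hw3 ε hε u hcore sbar hsbar
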